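/- arXiv:math/0304245 — 3 statements merged into one kernel-verified Lean document; each statement's English description precedes it below -/
import Mathlib

section
/- The second Hamiltonian operator of KdV, A¹(φ) := D_x³(φ) + (2/3)·u·D_x(φ) + (1/3)·u₁·φ, is a variational bivector on the KdV equation: for every φ ∈ R one has ℓ(A¹(φ)) + A¹(ℓ*(φ)) = 0. -/
/-!
STATEMENT 3: The second Hamiltonian operator of KdV,
`A¹(φ) := D_x³(φ) + (2/3)·u·D_x(φ) + (1/3)·u₁·φ`, is a variational bivector on the
KdV equation: for every `φ ∈ R` one has `ℓ(A¹(φ)) + A¹(ℓ*(φ)) = 0`.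
-/

open MvPolynomial

noncomputable section

/-- The polynomial algebra `R = ℚ[u₀, u₁, u₂, …]`; the variable `X k` is `u_k`. -/
abbrev KdVRing : Type := MvPolynomial ℕ ℚ

/-- The total derivative `D_x`: the unique derivation with `D_x(u_k) = u_{k+1}`. -/
def Dx : Derivation ℚ KdVRing KdVRing :=
  mkDerivation ℚ fun k => X (k + 1)

/-- The total derivative `D_t`: the unique derivation with `D_t(u_k) = D_x^k(u₃ + u·u₁)`. -/
def Dt : Derivation ℚ KdVRing KdVRing :=
  mkDerivation ℚ fun k => (⇑Dx)^[k] (X 3 + X 0 * X 1)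

/-- The linearization `ℓ = D_t − D_x³ − u·D_x − u₁` of the KdV equation. -/
def ell (φ : KdVRing) : KdVRing :=
  Dt φ - Dx (Dx (Dx φ)) - X 0 * Dx φ - X 1 * φ

/-- The adjoint linearization `ℓ* = −D_t + D_x³ + u·D_x` of the KdV equation. -/
def ellStar (φ : KdVRing) : KdVRing :=
  -Dt φ + Dx (Dx (Dx φ)) + X 0 * Dx φ

/-- The second Hamiltonian operator of KdV: `A¹ = D_x³ + (2/3)·u·D_x + (1/3)·u₁`. -/
def A1 (φ : KdVRing) : KdVRing :=
  Dx (Dx (Dx φ)) + C (2/3 : ℚ) * X 0 * Dx φ + C (1/3 : ℚ) * X 1 * φ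


lemma Dx_X (k : ℕ) : Dx (X k) = X (k+1) := mkDerivation_X ℚ _ k

lemma Dt_X (k : ℕ) : Dt (X k) = (⇑Dx)^[k] (X 3 + X 0 * X 1) := mkDerivation_X ℚ _ k

lemma DtDx_comm (p : KdVRing) : Dt (Dx p) = Dx (Dt p) := by
  have h : ⁅Dt, Dx⁆ = (0 : Derivation ℚ KdVRing KdVRing) := by
    apply derivation_ext
    intro i
    simp [Derivation.commutator_apply, Dx_X, Dt_X, Function.iterate_succ_apply']
  have := congrFun (congrArg (fun d : Derivation ℚ KdVRing KdVRing => (d : KdVRing → KdVRing)) h) p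
  simpa [Derivation.commutator_apply, sub_eq_zero] using this

lemma Dt_X0 : Dt (X 0) = X 3 + X 0 * X 1 := by simp [Dt_X]

lemma Dt_X1 : Dt (X 1) = X 4 + X 1 * X 1 + X 0 * X 2 := by
  have : Dt (X 1) = Dx (X 3 + X 0 * X 1) := by simp [Dt_X]
  rw [this]; simp only [map_add, Derivation.leibniz, Dx_X, smul_eq_mul]; ring

/-- `A¹` is a variational bivector on KdV: `ℓ ∘ A¹ + A¹ ∘ ℓ* = 0`. -/
theorem kdv_A1_is_variational_bivector (φ : KdVRing) :
    ell (A1 φ) + A1 (ellStar φ) = 0 := by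
  have key : (3:ℚ) • (ell (A1 φ) + A1 (ellStar φ)) = 0 := by
    simp only [ell, ellStar, A1, map_add, map_sub, map_neg, Derivation.leibniz,
      DtDx_comm, Dt_X0, Dt_X1, Dx_X, C_eq_smul_one, Derivation.map_smul, smul_mul_assoc,
      smul_eq_mul, Derivation.map_one_eq_zero, mul_zero, zero_mul, mul_one, one_mul,
      add_zero, zero_add]
    norm_num [smul_add, smul_sub, smul_neg, smul_smul, mul_smul_comm, smul_mul_assoc]
    simp only [Algebra.smul_def, map_ofNat, map_one]
    have h1 : (algebraMap ℚ KdVRing) (1/3) * 3 = 1 := by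
      rw [show ((3:KdVRing)) = algebraMap ℚ KdVRing 3 from (map_ofNat _ 3).symm, ← map_mul]
      norm_num
    have h2 : (algebraMap ℚ KdVRing) (2/3) * 3 = 2 := by
      rw [show ((3:KdVRing)) = algebraMap ℚ KdVRing 3 from (map_ofNat _ 3).symm, ← map_mul]
      norm_num
      exact map_ofNat C 2
    linear_combination (-(X 0 * Dx φ * X 1 * 2) - X 0 ^ 2 * Dx (Dx φ)) * h2 +
      (-(X 0 * Dx φ * X 1) - X 0 * φ * X 2 - X 1 ^ 2 * φ) * h1
  have h : ell (A1 φ) + A1 (ellStar φ) = (1/3 : ℚ) • ((3:ℚ) • (ell (A1 φ) + A1 (ellStar φ))) := by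
    rw [smul_smul]; norm_num
  rw [h, key, smul_zero]
end
end

section
/- The second KdV operator A¹(φ) := D_x³(φ) + (2/3)·u·D_x(φ) + (1/3)·u₁·φ satisfies the Hamiltonianity criterion [[A¹,A¹]] = 0: for all a, b ∈ R, (2/3)·A¹(a)·D_x(b) + (1/3)·D_x(A¹(a))·b − (2/3)·A¹(b)·D_x(a) − (1/3)·D_x(A¹(b))·a − A¹((1/3)·(D_x(a)·b − a·D_x(b))) = 0. -/
/-!
STATEMENT 4: The second KdV operator `A¹(φ) := D_x³(φ) + (2/3)·u·D_x(φ) + (1/3)·u₁·φ`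
satisfies the Hamiltonianity criterion `[[A¹,A¹]] = 0`: for all `a, b ∈ R`,
`(2/3)·A¹(a)·D_x(b) + (1/3)·D_x(A¹(a))·b − (2/3)·A¹(b)·D_x(a) − (1/3)·D_x(A¹(b))·a
  − A¹((1/3)·(D_x(a)·b − a·D_x(b))) = 0`.
-/

open MvPolynomial

noncomputable section

/-- The Hamiltonianity criterion `[[A¹,A¹]] = 0` for the second KdV operator. -/
theorem kdv_A1_hamiltonian (a b : KdVRing) :
    C (2/3 : ℚ) * A1 a * Dx b + C (1/3 : ℚ) * Dx (A1 a) * b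
      - C (2/3 : ℚ) * A1 b * Dx a - C (1/3 : ℚ) * Dx (A1 b) * a
      - A1 (C (1/3 : ℚ) * (Dx a * b - a * Dx b)) = 0 := by
  have hX : ∀ k : ℕ, Dx (X k) = X (k+1) := fun k => mkDerivation_X _ _ k
  have hC : (C (2/3 : ℚ) : KdVRing) = 2 * C (1/3 : ℚ) := by
    rw [show (2/3 : ℚ) = 2 * (1/3) by norm_num, map_mul, map_ofNat]
  have h2 : Dx 2 = 0 := by
    rw [show (2 : KdVRing) = ((2:ℕ) : KdVRing) by norm_num]; exact Dx.map_natCast 2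
  simp only [A1, map_add, map_sub, map_mul, Derivation.leibniz,
    smul_eq_mul, hX, MvPolynomial.derivation_C, map_zero, hC, h2]
  ring
end
end

section
/- The two KdV Hamiltonian operators A⁰(φ) := D_x(φ) and A¹(φ) := D_x³(φ) + (2/3)·u·D_x(φ) + (1/3)·u₁·φ form a Hamiltonian pair: for every λ ∈ ℚ the pencil C := A⁰ + λ·A¹ satisfies the Hamiltonianity criterion, i.e. for all a, b ∈ R, −λ·((2/3)·C(b)·D_x(a) + (1/3)·D_x(C(b))·a) + λ·((2/3)·C(a)·D_x(b) + (1/3)·D_x(C(a))·b) − C(λ·(1/3)·(D_x(a)·b − a·D_x(b))) = 0. -/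
/-!
STATEMENT 5: The two KdV Hamiltonian operators `A⁰(φ) := D_x(φ)` and
`A¹(φ) := D_x³(φ) + (2/3)·u·D_x(φ) + (1/3)·u₁·φ` form a Hamiltonian pair: for every
`λ ∈ ℚ` the pencil `C := A⁰ + λ·A¹` satisfies the Hamiltonianity criterion, i.e. for
all `a, b ∈ R`,
`−λ·((2/3)·C(b)·D_x(a) + (1/3)·D_x(C(b))·a) + λ·((2/3)·C(a)·D_x(b) + (1/3)·D_x(C(a))·b)
  − C(λ·(1/3)·(D_x(a)·b − a·D_x(b))) = 0`.
-/

open MvPolynomial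

noncomputable section

/-- The first Hamiltonian operator of KdV: `A⁰ = D_x`. -/
def A0 (φ : KdVRing) : KdVRing := Dx φ

/-- The pencil `C = A⁰ + λ·A¹`. -/
def pencil (l : ℚ) (φ : KdVRing) : KdVRing := A0 φ + C l * A1 φ

/-- `A⁰` and `A¹` are a Hamiltonian pair: every pencil `A⁰ + λ·A¹` satisfies the
Hamiltonianity criterion. -/
theorem kdv_hamiltonian_pair (l : ℚ) (a b : KdVRing) :
    -(C l * (C (2/3 : ℚ) * pencil l b * Dx a + C (1/3 : ℚ) * Dx (pencil l b) * a))
      + C l * (C (2/3 : ℚ) * pencil l a * Dx b + C (1/3 : ℚ) * Dx (pencil l a) * b)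
      - pencil l (C l * C (1/3 : ℚ) * (Dx a * b - a * Dx b)) = 0 := by
  have hC : ∀ c : ℚ, Dx (C c) = 0 := fun c => Dx.map_algebraMap c
  have hX : ∀ k : ℕ, Dx (X k) = X (k + 1) := fun k => mkDerivation_X ℚ _ k
  have h23 : (C (2/3 : ℚ) : KdVRing) = 2 * C (1/3 : ℚ) := by
    rw [show (2 : KdVRing) = C (2 : ℚ) from (map_ofNat _ 2).symm, ← C_mul]; norm_num
  have h2 : Dx (2 : KdVRing) = 0 := by
    rw [show (2 : KdVRing) = C (2 : ℚ) from (map_ofNat _ 2).symm]; exact hC 2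
  simp only [pencil, A0, A1, map_add, map_sub, Derivation.leibniz, hC, hX, h23, h2,
    smul_eq_mul, smul_zero, zero_mul, mul_zero, add_zero, zero_add, mul_one]
  ring
end
end
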